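/- arXiv:2401.00069 — 2 statements merged into one kernel-verified Lean document; each statement's English description precedes it below -/
import Mathlib

section
/- In the single-mode Weyl algebra, if two monomials m and m̂ (words in a, a†) with multi-degrees (r,s) and (r̂,ŝ) commute, then s·r̂ = r·ŝ. -/
open scoped BigOperators

namespace WeylPaper

/-- Defining relations of the `n`-th Weyl algebra: generators `Sum.inl k` are the
annihilation operators `aₖ`, generators `Sum.inr k` are the creation operators `aₖ†`,
with `[aᵢ, aⱼ†] = δᵢⱼ` and all other commutators of generators vanishing. -/
inductive WeylRel (n : ℕ) :
    FreeAlgebra ℂ (Fin n ⊕ Fin n) → FreeAlgebra ℂ (Fin n ⊕ Fin n) → Prop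
  | ann_cre (i j : Fin n) :
      WeylRel n (FreeAlgebra.ι ℂ (Sum.inl i) * FreeAlgebra.ι ℂ (Sum.inr j))
        (FreeAlgebra.ι ℂ (Sum.inr j) * FreeAlgebra.ι ℂ (Sum.inl i) +
          if i = j then 1 else 0)
  | ann_ann (i j : Fin n) :
      WeylRel n (FreeAlgebra.ι ℂ (Sum.inl i) * FreeAlgebra.ι ℂ (Sum.inl j))
        (FreeAlgebra.ι ℂ (Sum.inl j) * FreeAlgebra.ι ℂ (Sum.inl i))
  | cre_cre (i j : Fin n) :
      WeylRel n (FreeAlgebra.ι ℂ (Sum.inr i) * FreeAlgebra.ι ℂ (Sum.inr j))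
        (FreeAlgebra.ι ℂ (Sum.inr j) * FreeAlgebra.ι ℂ (Sum.inr i))

/-- The `n`-th Weyl algebra `Aₙ`. -/
abbrev Weyl (n : ℕ) := RingQuot (WeylRel n)

/-- The annihilation operator `aₖ`. -/
noncomputable def ann {n : ℕ} (k : Fin n) : Weyl n :=
  RingQuot.mkAlgHom ℂ (WeylRel n) (FreeAlgebra.ι ℂ (Sum.inl k))

/-- The creation operator `aₖ†`. -/
noncomputable def cre {n : ℕ} (k : Fin n) : Weyl n :=
  RingQuot.mkAlgHom ℂ (WeylRel n) (FreeAlgebra.ι ℂ (Sum.inr k))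

/-- The commutator `[x, y] = xy - yx`. -/
def comm {n : ℕ} (x y : Weyl n) : Weyl n := x * y - y * x

/-- The normal-ordered monomial `a^{(α,β)} = ∏ⱼ (aⱼ†)^{αⱼ} · ∏ⱼ aⱼ^{βⱼ}`. -/
noncomputable def nom {n : ℕ} (α β : Fin n → ℕ) : Weyl n :=
  ((List.finRange n).map fun j => cre j ^ α j).prod *
  ((List.finRange n).map fun j => ann j ^ β j).prod

/-- `degLe x d` : `x` admits an expansion into normal-ordered monomials of degree
`|γ| = |α| + |β| ≤ d` (this is "deg(x) ≤ d"; it holds for `x = 0` and every `d`,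
matching `deg 0 = -∞`). -/
def degLe {n : ℕ} (x : Weyl n) (d : ℤ) : Prop :=
  ∃ c : ((Fin n → ℕ) × (Fin n → ℕ)) →₀ ℂ,
    x = c.sum (fun γ z => z • nom γ.1 γ.2) ∧
    ∀ γ ∈ c.support, ((∑ j, γ.1 j : ℕ) : ℤ) + ((∑ j, γ.2 j : ℕ) : ℤ) ≤ d

/-- `hasDeg x d` : `x` has degree exactly `d`. -/
def hasDeg {n : ℕ} (x : Weyl n) (d : ℤ) : Prop := degLe x d ∧ ¬ degLe x (d - 1)

/-- The generator corresponding to a letter. -/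
noncomputable def gen {n : ℕ} : (Fin n ⊕ Fin n) → Weyl n := Sum.elim ann cre

/-- The monomial (word in the generators `aₖ`, `aₖ†`) given by a list of letters. -/
noncomputable def word {n : ℕ} (w : List (Fin n ⊕ Fin n)) : Weyl n := (w.map gen).prod

/-- `α` : number of occurrences of `aⱼ†` in the word `w`. -/
def mdegC {n : ℕ} (w : List (Fin n ⊕ Fin n)) (j : Fin n) : ℕ := w.count (Sum.inr j)

/-- `β` : number of occurrences of `aⱼ` in the word `w`. -/
def mdegA {n : ℕ} (w : List (Fin n ⊕ Fin n)) (j : Fin n) : ℕ := w.count (Sum.inl j)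

/-- The basis element `g₊^{(α,β)} = i (a^{(β,α)} + a^{(α,β)})`. -/
noncomputable def gplus {n : ℕ} (α β : Fin n → ℕ) : Weyl n :=
  Complex.I • (nom β α + nom α β)

/-- The basis element `g₋^{(α,β)} = a^{(β,α)} - a^{(α,β)}`. -/
noncomputable def gminus {n : ℕ} (α β : Fin n → ℕ) : Weyl n :=
  nom β α - nom α β

/-- Type synonym for the opposite algebra, with ℂ acting through conjugation;
used to construct the adjoint `(·)†`. -/
def Conj (n : ℕ) : Type := (Weyl n)ᵐᵒᵖ

instance (n : ℕ) : Ring (Conj n) := inferInstanceAs (Ring (Weyl n)ᵐᵒᵖ)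

noncomputable instance (n : ℕ) : Algebra ℂ (Conj n) :=
  RingHom.toAlgebra' ((algebraMap ℂ (Weyl n)ᵐᵒᵖ).comp (starRingEnd ℂ))
    (fun c x =>
      Algebra.commutes (A := (Weyl n)ᵐᵒᵖ) (starRingEnd ℂ c) (show (Weyl n)ᵐᵒᵖ from x))

noncomputable def daggerAux (n : ℕ) : FreeAlgebra ℂ (Fin n ⊕ Fin n) →ₐ[ℂ] Conj n :=
  FreeAlgebra.lift ℂ fun s =>
    (MulOpposite.op (Sum.elim (fun k => cre k) (fun k => ann k) s : Weyl n) : Conj n)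

noncomputable def daggerHom (n : ℕ) : Weyl n →+* Conj n :=
  RingQuot.lift ⟨(daggerAux n).toRingHom, by
    have key : ∀ (x y : FreeAlgebra ℂ (Fin n ⊕ Fin n)), WeylRel n x y →
        RingQuot.mkAlgHom ℂ (WeylRel n) x = RingQuot.mkAlgHom ℂ (WeylRel n) y :=
      fun x y h => RingQuot.mkAlgHom_rel ℂ h
    intro x y h
    induction h with
    | ann_cre i j =>
        show (daggerAux n) _ = (daggerAux n) _
        by_cases hij : i = j
        · subst hij
          have hcomm : (ann i : Weyl n) * cre i = cre i * ann i + 1 := by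
            have hrel := key _ _ (WeylRel.ann_cre i i)
            rw [if_pos rfl] at hrel
            simpa [ann, cre] using hrel
          simp only [eq_self_iff_true, if_true, ite_true, map_mul, map_add, map_one, daggerAux,
            FreeAlgebra.lift_ι_apply, Sum.elim_inl, Sum.elim_inr]
          erw [FreeAlgebra.lift_ι_apply, FreeAlgebra.lift_ι_apply]
          calc (MulOpposite.op (cre i) : Conj n) * MulOpposite.op (ann i)
              = MulOpposite.op ((ann i : Weyl n) * cre i) := rfl
            _ = MulOpposite.op ((cre i : Weyl n) * ann i + 1) := by rw [hcomm]
            _ = MulOpposite.op (ann i) * MulOpposite.op (cre i) + 1 := rfl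
        · have hcomm : (ann j : Weyl n) * cre i = cre i * ann j := by
            have hrel := key _ _ (WeylRel.ann_cre j i)
            rw [if_neg (fun h => hij h.symm)] at hrel
            simpa [ann, cre] using hrel
          simp only [if_neg hij, map_mul, map_add, map_zero, add_zero, daggerAux,
            FreeAlgebra.lift_ι_apply, Sum.elim_inl, Sum.elim_inr]
          erw [FreeAlgebra.lift_ι_apply, FreeAlgebra.lift_ι_apply]
          calc (MulOpposite.op (cre i) : Conj n) * MulOpposite.op (ann j)
              = MulOpposite.op ((ann j : Weyl n) * cre i) := rfl
            _ = MulOpposite.op ((cre i : Weyl n) * ann j) := by rw [hcomm]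
            _ = MulOpposite.op (ann j) * MulOpposite.op (cre i) := rfl
    | ann_ann i j =>
        show (daggerAux n) _ = (daggerAux n) _
        have hcomm : (cre j : Weyl n) * cre i = cre i * cre j := by
          simpa [cre] using key _ _ (WeylRel.cre_cre j i)
        simp only [map_mul, daggerAux, FreeAlgebra.lift_ι_apply, Sum.elim_inl]
        erw [FreeAlgebra.lift_ι_apply, FreeAlgebra.lift_ι_apply]
        calc (MulOpposite.op (cre i) : Conj n) * MulOpposite.op (cre j)
            = MulOpposite.op ((cre j : Weyl n) * cre i) := rfl
          _ = MulOpposite.op ((cre i : Weyl n) * cre j) := by rw [hcomm]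
          _ = MulOpposite.op (cre j) * MulOpposite.op (cre i) := rfl
    | cre_cre i j =>
        show (daggerAux n) _ = (daggerAux n) _
        have hcomm : (ann j : Weyl n) * ann i = ann i * ann j := by
          simpa [ann] using key _ _ (WeylRel.ann_ann j i)
        simp only [map_mul, daggerAux, FreeAlgebra.lift_ι_apply, Sum.elim_inr]
        erw [FreeAlgebra.lift_ι_apply, FreeAlgebra.lift_ι_apply]
        calc (MulOpposite.op (ann i) : Conj n) * MulOpposite.op (ann j)
            = MulOpposite.op ((ann j : Weyl n) * ann i) := rfl
          _ = MulOpposite.op ((ann i : Weyl n) * ann j) := by rw [hcomm]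
          _ = MulOpposite.op (ann j) * MulOpposite.op (ann i) := rfl⟩

/-- The adjoint `(·)†` : the ℂ-antilinear anti-automorphism of the Weyl algebra
determined by `(aⱼ)† = aⱼ†` and `(aⱼ†)† = aⱼ`. -/
noncomputable def dagger {n : ℕ} (x : Weyl n) : Weyl n :=
  MulOpposite.unop (show (Weyl n)ᵐᵒᵖ from daggerHom n x)



/-! ### Auxiliary representation for Statement 7

We represent the single-mode Weyl algebra on `M1 := ℤ →₀ ℂ[t]` (think of the basis
vector at `n` with coefficient `p(t)` as `p(t)·xᵗ⁺ⁿ`): the creation operator shifts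
`eₙ ↦ eₙ₊₁` and the annihilation operator acts by `eₙ ↦ (t+n)·eₙ₋₁`.  In this
representation no truncation ever occurs, so a word of multidegree `(r,s)` sends
`eₙ` to a product of `s` monic linear polynomials times `eₙ₊ᵣ₋ₛ`, and comparing
subleading coefficients of the resulting polynomial identity gives `s·r̂ = r·ŝ`. -/

open Polynomial in
/-- The representation module: `ℤ →₀ ℂ[t]`. -/
abbrev M1 : Type := ℤ →₀ Polynomial ℂ

open Polynomial

/-- Annihilation operator on `M1`: `eₙ ↦ (t+n)·eₙ₋₁`. -/
noncomputable def lowerOp : M1 →ₗ[ℂ] M1 :=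
  Finsupp.lsum ℂ fun n => (Finsupp.lsingle (n - 1)).comp (LinearMap.mulLeft ℂ (X + C (n : ℂ)))

/-- Creation operator on `M1`: `eₙ ↦ eₙ₊₁`. -/
noncomputable def raiseOp : M1 →ₗ[ℂ] M1 :=
  Finsupp.lsum ℂ fun n => Finsupp.lsingle (n + 1)

lemma lowerOp_single (n : ℤ) (p : Polynomial ℂ) :
    lowerOp (Finsupp.single n p) = Finsupp.single (n - 1) ((X + C (n : ℂ)) * p) := by
  rw [lowerOp, Finsupp.lsum_single, LinearMap.comp_apply, LinearMap.mulLeft_apply,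
    Finsupp.lsingle_apply]

lemma raiseOp_single (n : ℤ) (p : Polynomial ℂ) :
    raiseOp (Finsupp.single n p) = Finsupp.single (n + 1) p := by
  rw [raiseOp, Finsupp.lsum_single, Finsupp.lsingle_apply]

/-- The representation of the single-mode Weyl algebra on `M1`. -/
noncomputable def rep : Weyl 1 →ₐ[ℂ] Module.End ℂ M1 :=
  RingQuot.liftAlgHom ℂ
    ⟨FreeAlgebra.lift ℂ (Sum.elim (fun _ => lowerOp) (fun _ => raiseOp)), by
      intro x y h
      induction h with
      | ann_cre i j =>
          have hij : i = j := Subsingleton.elim i j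
          subst hij
          rw [if_pos rfl]
          simp only [map_mul, map_add, map_one, FreeAlgebra.lift_ι_apply,
            Sum.elim_inl, Sum.elim_inr]
          refine Finsupp.lhom_ext fun n p => ?_
          rw [Module.End.mul_apply, LinearMap.add_apply, Module.End.mul_apply,
            Module.End.one_apply, raiseOp_single, lowerOp_single, lowerOp_single,
            raiseOp_single]
          have h1 : n + 1 - 1 = n := by ring
          have h2 : n - 1 + 1 = n := by ring
          rw [h1, h2, ← Finsupp.single_add]
          congr 1
          push_cast
          simp only [C_add, C_1]
          ring
      | ann_ann i j =>
          simp only [map_mul, FreeAlgebra.lift_ι_apply, Sum.elim_inl]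
      | cre_cre i j =>
          simp only [map_mul, FreeAlgebra.lift_ι_apply, Sum.elim_inr]⟩

lemma rep_ann (k : Fin 1) : rep (ann k) = lowerOp := by
  rw [rep, ann, RingQuot.liftAlgHom_mkAlgHom_apply]
  simp [FreeAlgebra.lift_ι_apply]

lemma rep_cre (k : Fin 1) : rep (cre k) = raiseOp := by
  rw [rep, cre, RingQuot.liftAlgHom_mkAlgHom_apply]
  simp [FreeAlgebra.lift_ι_apply]

lemma word_cons {n : ℕ} (l : Fin n ⊕ Fin n) (w : List (Fin n ⊕ Fin n)) :
    word (l :: w) = gen l * word w := by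
  simp [word]

/-- Key computation: a word of multidegree `(r,s)` acts on `M1` by a shift by `r - s`
together with multiplication by a product of `s` monic linear polynomials. -/
lemma rep_word_single (w : List (Fin 1 ⊕ Fin 1)) :
    ∃ S : Multiset ℂ, S.card = mdegA w 0 ∧ ∀ (n : ℤ) (p : Polynomial ℂ),
      rep (word w) (Finsupp.single n p) =
        Finsupp.single (n + ((mdegC w 0 : ℤ) - (mdegA w 0 : ℤ)))
          ((S.map fun c => X + C (c + (n : ℂ))).prod * p) := by
  induction w with
  | nil =>
      refine ⟨0, rfl, fun n p => ?_⟩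
      rw [word, List.map_nil, List.prod_nil, map_one, Module.End.one_apply,
        Multiset.map_zero, Multiset.prod_zero, one_mul]
      norm_num [mdegA, mdegC]
  | cons l w ih =>
      obtain ⟨S, hcard, hS⟩ := ih
      have hw : ∀ x : M1, rep (word (l :: w)) x = rep (gen l) (rep (word w) x) := by
        intro x
        rw [word_cons, map_mul, Module.End.mul_apply]
      obtain ⟨i⟩ | ⟨i⟩ := l
      · -- annihilation letter
        have hi : i = (0 : Fin 1) := Subsingleton.elim i 0
        subst hi
        have hA : mdegA (Sum.inl 0 :: w) 0 = mdegA w 0 + 1 := by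
          simp [mdegA, List.count_cons] <;> decide
        have hC : mdegC (Sum.inl 0 :: w) 0 = mdegC w 0 := by
          simp [mdegC, List.count_cons] <;> decide
        refine ⟨(((mdegC w 0 : ℤ) - (mdegA w 0 : ℤ) : ℤ) : ℂ) ::ₘ S, ?_, fun n p => ?_⟩
        · rw [Multiset.card_cons, hcard, hA]
        · rw [hw, hS, gen, Sum.elim_inl, rep_ann, lowerOp_single, hA, hC]
          rw [Multiset.map_cons, Multiset.prod_cons]
          congr 1
          · push_cast; ring
          · push_cast
            simp only [C_add, C_sub]
            ring
      · -- creation letter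
        have hi : i = (0 : Fin 1) := Subsingleton.elim i 0
        subst hi
        have hC : mdegC (Sum.inr 0 :: w) 0 = mdegC w 0 + 1 := by
          simp [mdegC, List.count_cons] <;> decide
        have hA : mdegA (Sum.inr 0 :: w) 0 = mdegA w 0 := by
          simp [mdegA, List.count_cons] <;> decide
        refine ⟨S, by rw [hcard, hA], fun n p => ?_⟩
        rw [hw, hS, gen, Sum.elim_inr, rep_cre, raiseOp_single, hA, hC]
        congr 1
        push_cast
        ring

/-- In the single-mode Weyl algebra, if two monomials `m`, `m̂` (words in
`a`, `a†`) with multi-degrees `(r,s)` and `(r̂,ŝ)` commute, then `s·r̂ = r·ŝ`. -/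
theorem statement7 (w w' : List (Fin 1 ⊕ Fin 1))
    (h : comm (word w) (word w') = 0) :
    mdegA w 0 * mdegC w' 0 = mdegC w 0 * mdegA w' 0 := by
  classical
  obtain ⟨S, hScard, hS⟩ := rep_word_single w
  obtain ⟨S', hS'card, hS'⟩ := rep_word_single w'
  have hcomm : word w * word w' = word w' * word w := sub_eq_zero.mp h
  have h2 : rep (word w * word w') = rep (word w' * word w) := congrArg _ hcomm
  rw [map_mul, map_mul] at h2
  have happ := DFunLike.congr_fun h2 (Finsupp.single (0 : ℤ) (1 : Polynomial ℂ))
  rw [Module.End.mul_apply, Module.End.mul_apply] at happ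
  simp only [hS, hS', mul_one] at happ
  rcases (Finsupp.single_eq_single_iff _ _ _ _).mp happ with ⟨-, hpoly⟩ | ⟨h1, -⟩
  · have hnc := congrArg nextCoeff hpoly
    rw [Monic.nextCoeff_mul (monic_multiset_prod_of_monic _ _ fun c _ => monic_X_add_C _)
          (monic_multiset_prod_of_monic _ _ fun c _ => monic_X_add_C _),
        Monic.nextCoeff_mul (monic_multiset_prod_of_monic _ _ fun c _ => monic_X_add_C _)
          (monic_multiset_prod_of_monic _ _ fun c _ => monic_X_add_C _),
        Monic.nextCoeff_multiset_prod _ _ (fun c _ => monic_X_add_C _),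
        Monic.nextCoeff_multiset_prod _ _ (fun c _ => monic_X_add_C _),
        Monic.nextCoeff_multiset_prod _ _ (fun c _ => monic_X_add_C _),
        Monic.nextCoeff_multiset_prod _ _ (fun c _ => monic_X_add_C _)] at hnc
    simp only [nextCoeff_X_add_C, Multiset.sum_map_add, Multiset.map_id', Multiset.map_const',
      Multiset.sum_replicate, smul_eq_mul, nsmul_eq_mul, hScard, hS'card, zero_add,
      add_zero] at hnc
    push_cast at hnc
    have key : (mdegA w 0 : ℂ) * (mdegC w' 0 : ℂ) = (mdegC w 0 : ℂ) * (mdegA w' 0 : ℂ) := by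
      linear_combination hnc
    exact_mod_cast key
  · exact absurd h1
      (Monic.ne_zero ((monic_multiset_prod_of_monic _ _ fun c _ => monic_X_add_C _).mul
        (monic_multiset_prod_of_monic _ _ fun c _ => monic_X_add_C _)))

end WeylPaper
end

section
/- Any two monomials in the n-mode Weyl algebra whose multi-degrees are of the form (α̃, α̃) and (α̃′, α̃′) (equal numbers of creation and annihilation operators per mode) commute. -/
open scoped BigOperators

namespace WeylPaper

section Aux

variable {n : ℕ}

lemma ann_mul_cre (i j : Fin n) :
    ann i * cre j = cre j * ann i + if i = j then 1 else 0 := by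
  have h := RingQuot.mkAlgHom_rel ℂ (WeylRel.ann_cre i j)
  by_cases hij : i = j
  · subst hij
    simp only [if_pos rfl] at h ⊢
    simpa [ann, cre, map_mul, map_add, map_one] using h
  · simp only [if_neg hij] at h ⊢
    simpa [ann, cre, map_mul, map_add, map_zero] using h

lemma cre_mul_cre (i j : Fin n) : cre i * cre j = cre j * cre i := by
  have h := RingQuot.mkAlgHom_rel ℂ (WeylRel.cre_cre i j)
  simpa [map_mul, cre] using h

lemma ann_mul_ann (i j : Fin n) : ann i * ann j = ann j * ann i := by
  have h := RingQuot.mkAlgHom_rel ℂ (WeylRel.ann_ann i j)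
  simpa [map_mul, ann] using h

lemma commute_ann_cre {i j : Fin n} (h : i ≠ j) : Commute (ann i) (cre j) := by
  have hh := ann_mul_cre i j
  rw [if_neg h, add_zero] at hh
  exact hh

lemma commute_cre_ann {i j : Fin n} (h : i ≠ j) : Commute (cre i) (ann j) :=
  (commute_ann_cre (Ne.symm h)).symm

lemma ann_cre_same (j : Fin n) : ann j * cre j = cre j * ann j + 1 := by
  have hh := ann_mul_cre j j
  rwa [if_pos rfl] at hh

/-- Multiply a commuting element into one slot of a list product. -/
lemma mul_map_prod_update {M ι : Type*} [Monoid M] [DecidableEq ι] (x : M) (f : ι → M)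
    (j : ι) : ∀ (l : List ι), l.Nodup → j ∈ l → (∀ i ∈ l, i ≠ j → Commute x (f i)) →
    x * (l.map f).prod = (l.map (Function.update f j (x * f j))).prod := by
  intro l
  induction l with
  | nil => intro _ hj; exact absurd hj List.not_mem_nil
  | cons a t ih =>
    intro hnd hj hc
    obtain ⟨haT, hndT⟩ := List.nodup_cons.mp hnd
    by_cases haj : a = j
    · subst haj
      have ht : t.map (Function.update f a (x * f a)) = t.map f :=
        List.map_congr_left fun i hi => Function.update_of_ne (fun h => haT (by rwa [h] at hi)) _ _
      simp [ht, mul_assoc]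
    · have hjT : j ∈ t := by
        rcases List.mem_cons.mp hj with h | h
        · exact absurd h.symm haj
        · exact h
      have hxa : Commute x (f a) := hc a List.mem_cons_self haj
      rw [List.map_cons, List.prod_cons, ← mul_assoc, hxa.eq, mul_assoc,
        ih hndT hjT (fun i hi hij => hc i (List.mem_cons_of_mem a hi) hij),
        List.map_cons, List.prod_cons, Function.update_of_ne haj]

/-- Move an element across a list product, with a correction term in one slot. -/
lemma mul_map_prod_split {M ι : Type*} [Ring M] [DecidableEq ι] (x g : M) (c : ℕ)
    (f : ι → M) (j : ι) : ∀ (l : List ι), l.Nodup → j ∈ l →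
    (∀ i ∈ l, i ≠ j → Commute x (f i)) → x * f j = f j * x + c • g →
    x * (l.map f).prod = (l.map f).prod * x + c • (l.map (Function.update f j g)).prod := by
  intro l
  induction l with
  | nil => intro _ hj; exact absurd hj List.not_mem_nil
  | cons a t ih =>
    intro hnd hj hc hg
    obtain ⟨haT, hndT⟩ := List.nodup_cons.mp hnd
    by_cases haj : a = j
    · subst haj
      have ht : t.map (Function.update f a g) = t.map f :=
        List.map_congr_left fun i hi => Function.update_of_ne (fun h => haT (by rwa [h] at hi)) _ _
      have hx : Commute x (t.map f).prod := by
        apply Commute.list_prod_right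
        intro y hy
        obtain ⟨i, hi, rfl⟩ := List.mem_map.mp hy
        exact hc i (List.mem_cons_of_mem a hi) (fun h => haT (by rwa [h] at hi))
      rw [List.map_cons, List.prod_cons, ← mul_assoc, hg, add_mul, mul_assoc, hx.eq,
        List.map_cons, List.prod_cons, Function.update_self, ht, smul_mul_assoc,
        ← mul_assoc]
    · have hjT : j ∈ t := by
        rcases List.mem_cons.mp hj with h | h
        · exact absurd h.symm haj
        · exact h
      have hxa : Commute x (f a) := hc a List.mem_cons_self haj
      rw [List.map_cons, List.prod_cons, ← mul_assoc, hxa.eq, mul_assoc,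
        ih hndT hjT (fun i hi hij => hc i (List.mem_cons_of_mem a hi) hij) hg,
        mul_add, List.map_cons, List.prod_cons, Function.update_of_ne haj,
        ← mul_assoc, mul_smul_comm]

/-- Interleave two list products of cross-commuting families. -/
lemma map_prod_mul_map_prod {M ι : Type*} [Monoid M] (f g : ι → M) :
    ∀ (l : List ι), l.Nodup → (∀ i ∈ l, ∀ k ∈ l, i ≠ k → Commute (g i) (f k)) →
    (l.map f).prod * (l.map g).prod = (l.map fun i => f i * g i).prod := by
  intro l
  induction l with
  | nil => simp
  | cons a t ih =>
    intro hnd hc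
    obtain ⟨haT, hndT⟩ := List.nodup_cons.mp hnd
    have hga : Commute (g a) (t.map f).prod := by
      apply Commute.list_prod_right
      intro y hy
      obtain ⟨i, hi, rfl⟩ := List.mem_map.mp hy
      exact hc a List.mem_cons_self i (List.mem_cons_of_mem a hi)
        (fun h => haT (by rw [h]; exact hi))
    calc (((a :: t).map f).prod) * (((a :: t).map g).prod)
        = f a * ((t.map f).prod * g a) * (t.map g).prod := by
          simp [mul_assoc]
      _ = f a * (g a * (t.map f).prod) * (t.map g).prod := by rw [hga.symm.eq]
      _ = (f a * g a) * ((t.map f).prod * (t.map g).prod) := by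
          simp [mul_assoc]
      _ = (((a :: t).map fun i => f i * g i).prod) := by
          rw [ih hndT (fun i hi k hk hik =>
            hc i (List.mem_cons_of_mem a hi) k (List.mem_cons_of_mem a hk) hik)]
          simp

/-- `N * a^k = a^k * (N - k)` for the number operator `N = a† a`. -/
lemma num_mul_ann_pow (j : Fin n) :
    ∀ k : ℕ, (cre j * ann j) * ann j ^ k = ann j ^ k * (cre j * ann j - (k : Weyl n)) := by
  have h1 : (cre j * ann j) * ann j = ann j * (cre j * ann j - 1) := by
    have h := ann_cre_same j
    calc (cre j * ann j) * ann j = (cre j * ann j + 1) * ann j - ann j := by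
          rw [add_mul, one_mul, add_sub_cancel_right]
      _ = (ann j * cre j) * ann j - ann j := by rw [h]
      _ = ann j * (cre j * ann j) - ann j * 1 := by rw [mul_assoc, mul_one]
      _ = ann j * (cre j * ann j - 1) := by rw [← mul_sub]
  intro k
  induction k with
  | zero => simp
  | succ k ih =>
    have : ((k : Weyl n) + 1) = ((k + 1 : ℕ) : Weyl n) := by push_cast; ring
    calc (cre j * ann j) * ann j ^ (k + 1)
        = ((cre j * ann j) * ann j) * ann j ^ k := by rw [pow_succ', ← mul_assoc]
      _ = ann j * ((cre j * ann j) * ann j ^ k - ann j ^ k) := by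
          rw [h1, mul_assoc, sub_one_mul, mul_sub]
      _ = ann j * (ann j ^ k * (cre j * ann j - (k : Weyl n)) - ann j ^ k * 1) := by
          rw [ih, mul_one]
      _ = (ann j * ann j ^ k) * ((cre j * ann j - (k : Weyl n)) - 1) := by
          rw [← mul_sub, mul_assoc]
      _ = ann j ^ (k + 1) * (cre j * ann j - ((k + 1 : ℕ) : Weyl n)) := by
          rw [← pow_succ', sub_sub, this]

/-- `a†^k a^k` is the falling-factorial polynomial in the number operator. -/
lemma cre_pow_mul_ann_pow (j : Fin n) :
    ∀ k : ℕ, cre j ^ k * ann j ^ k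
      = ((List.range k).map fun i : ℕ => cre j * ann j - (i : Weyl n)).prod := by
  intro k
  induction k with
  | zero => simp
  | succ k ih =>
    rw [List.range_succ, List.map_append, List.prod_append, ← ih]
    calc cre j ^ (k + 1) * ann j ^ (k + 1)
        = cre j ^ k * ((cre j * ann j) * ann j ^ k) := by
          rw [pow_succ, pow_succ', mul_assoc, ← mul_assoc (cre j)]
      _ = cre j ^ k * (ann j ^ k * (cre j * ann j - (k : Weyl n))) := by
          rw [num_mul_ann_pow]
      _ = (cre j ^ k * ann j ^ k) * (cre j * ann j - (k : Weyl n)) := by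
          rw [mul_assoc]
      _ = _ := by simp

/-- Same-mode diagonal monomials commute. -/
lemma commute_diag_same (j : Fin n) (a b : ℕ) :
    Commute (cre j ^ a * ann j ^ a) (cre j ^ b * ann j ^ b) := by
  rw [cre_pow_mul_ann_pow, cre_pow_mul_ann_pow]
  apply Commute.list_prod_right
  intro x hx
  apply Commute.list_prod_left
  intro y hy
  obtain ⟨i, _, rfl⟩ := List.mem_map.mp hx
  obtain ⟨i', _, rfl⟩ := List.mem_map.mp hy
  exact Commute.sub_right
    (Commute.sub_left (Commute.refl _) (Nat.cast_commute _ _))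
    (Commute.sub_left ((Nat.cast_commute _ _).symm) (Nat.cast_commute _ _))

/-- Cross-mode monomials commute. -/
lemma commute_cross {i j : Fin n} (h : i ≠ j) (a b c d : ℕ) :
    Commute (cre i ^ a * ann i ^ b) (cre j ^ c * ann j ^ d) := by
  have hcc : Commute (cre i) (cre j) := cre_mul_cre i j
  have hca : Commute (cre i) (ann j) := commute_cre_ann h
  have hac : Commute (ann i) (cre j) := commute_ann_cre h
  have haa : Commute (ann i) (ann j) := ann_mul_ann i j
  exact Commute.mul_left
    ((hcc.pow_pow a c).mul_right (hca.pow_pow a d))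
    ((hac.pow_pow b c).mul_right (haa.pow_pow b d))

noncomputable def creProd (α : Fin n → ℕ) : Weyl n :=
  ((List.finRange n).map fun j => cre j ^ α j).prod

noncomputable def annProd (β : Fin n → ℕ) : Weyl n :=
  ((List.finRange n).map fun j => ann j ^ β j).prod

lemma nom_def (α β : Fin n → ℕ) : nom α β = creProd α * annProd β := rfl

lemma cre_mul_creProd (j : Fin n) (α : Fin n → ℕ) :
    cre j * creProd α = creProd (Function.update α j (α j + 1)) := by
  rw [creProd, mul_map_prod_update (cre j) (fun i => cre i ^ α i) j (List.finRange n)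
    (List.nodup_finRange n) (List.mem_finRange j)
    (fun i _ _ => (show Commute (cre j) (cre i) from cre_mul_cre j i).pow_right _), creProd]
  congr 1
  apply List.map_congr_left
  intro i _
  by_cases hij : i = j
  · subst hij
    rw [Function.update_self, Function.update_self, pow_succ']
  · rw [Function.update_of_ne hij, Function.update_of_ne hij]

lemma ann_mul_annProd (j : Fin n) (β : Fin n → ℕ) :
    ann j * annProd β = annProd (Function.update β j (β j + 1)) := by
  rw [annProd, mul_map_prod_update (ann j) (fun i => ann i ^ β i) j (List.finRange n)
    (List.nodup_finRange n) (List.mem_finRange j)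
    (fun i _ _ => (show Commute (ann j) (ann i) from ann_mul_ann j i).pow_right _), annProd]
  congr 1
  apply List.map_congr_left
  intro i _
  by_cases hij : i = j
  · subst hij
    rw [Function.update_self, Function.update_self, pow_succ']
  · rw [Function.update_of_ne hij, Function.update_of_ne hij]

lemma ann_mul_cre_pow (j : Fin n) (k : ℕ) :
    ann j * cre j ^ k = cre j ^ k * ann j + k • cre j ^ (k - 1) := by
  induction k with
  | zero => simp
  | succ k ih =>
    have step : ann j * cre j ^ (k + 1)
        = cre j ^ (k + 1) * ann j + (k • (cre j * cre j ^ (k - 1)) + cre j ^ k) := by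
      calc ann j * cre j ^ (k + 1) = (ann j * cre j) * cre j ^ k := by
            rw [pow_succ', ← mul_assoc]
        _ = (cre j * ann j + 1) * cre j ^ k := by rw [ann_cre_same]
        _ = cre j * (ann j * cre j ^ k) + cre j ^ k := by rw [add_mul, one_mul, mul_assoc]
        _ = cre j * (cre j ^ k * ann j + k • cre j ^ (k - 1)) + cre j ^ k := by rw [ih]
        _ = cre j ^ (k + 1) * ann j + (k • (cre j * cre j ^ (k - 1)) + cre j ^ k) := by
            rw [mul_add, ← mul_assoc, ← pow_succ', mul_smul_comm, add_assoc]
    rw [step]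
    congr 1
    cases k with
    | zero => simp
    | succ m =>
      rw [Nat.succ_sub_one, ← pow_succ', Nat.succ_sub_one,
        succ_nsmul (cre j ^ (m + 1)) (m + 1)]

lemma ann_mul_creProd (j : Fin n) (α : Fin n → ℕ) :
    ann j * creProd α
      = creProd α * ann j + α j • creProd (Function.update α j (α j - 1)) := by
  have hupd : (List.map (Function.update (fun i => cre i ^ α i) j (cre j ^ (α j - 1)))
      (List.finRange n)).prod = creProd (Function.update α j (α j - 1)) := by
    rw [creProd]
    congr 1
    apply List.map_congr_left
    intro i _
    by_cases hij : i = j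
    · subst hij
      rw [Function.update_self, Function.update_self]
    · rw [Function.update_of_ne hij, Function.update_of_ne hij]
  have hmain := mul_map_prod_split (ann j) (cre j ^ (α j - 1)) (α j) (fun i => cre i ^ α i) j
    (List.finRange n) (List.nodup_finRange n) (List.mem_finRange j)
    (fun i _ hij => (commute_ann_cre (Ne.symm hij)).pow_right _) (ann_mul_cre_pow j (α j))
  rw [hupd] at hmain
  exact hmain

lemma cre_mul_nom (j : Fin n) (α β : Fin n → ℕ) :
    cre j * nom α β = nom (Function.update α j (α j + 1)) β := by
  rw [nom_def, nom_def, ← mul_assoc, cre_mul_creProd]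

lemma ann_mul_nom (j : Fin n) (α β : Fin n → ℕ) :
    ann j * nom α β = nom α (Function.update β j (β j + 1))
      + α j • nom (Function.update α j (α j - 1)) β := by
  rw [nom_def, ← mul_assoc, ann_mul_creProd, add_mul, smul_mul_assoc, mul_assoc,
    ann_mul_annProd, ← nom_def, ← nom_def]

lemma nom_diag (α : Fin n → ℕ) :
    nom α α = ((List.finRange n).map fun j => cre j ^ α j * ann j ^ α j).prod :=
  map_prod_mul_map_prod (fun j => cre j ^ α j) (fun j => ann j ^ α j) (List.finRange n)
    (List.nodup_finRange n) (fun i _ k _ hik => (commute_ann_cre hik).pow_pow _ _)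

lemma commute_nom_diag (α α' : Fin n → ℕ) : Commute (nom α α) (nom α' α') := by
  rw [nom_diag, nom_diag]
  apply Commute.list_prod_right
  intro x hx
  apply Commute.list_prod_left
  intro y hy
  obtain ⟨k, _, rfl⟩ := List.mem_map.mp hx
  obtain ⟨i, _, rfl⟩ := List.mem_map.mp hy
  by_cases hik : i = k
  · subst hik
    exact commute_diag_same i _ _
  · exact commute_cross hik _ _ _ _

lemma beq_inr_inr (i j : Fin n) : ((Sum.inr i : Fin n ⊕ Fin n) == Sum.inr j) = (i == j) := rfl
lemma beq_inl_inl (i j : Fin n) : ((Sum.inl i : Fin n ⊕ Fin n) == Sum.inl j) = (i == j) := rfl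
lemma beq_inr_inl (i j : Fin n) : ((Sum.inr i : Fin n ⊕ Fin n) == Sum.inl j) = false := rfl
lemma beq_inl_inr (i j : Fin n) : ((Sum.inl i : Fin n ⊕ Fin n) == Sum.inr j) = false := rfl

def Sset (δ : Fin n → ℤ) : Set (Weyl n) :=
  {x | ∃ α β : Fin n → ℕ, (∀ i, (α i : ℤ) - β i = δ i) ∧ x = nom α β}

lemma word_mem (w : List (Fin n ⊕ Fin n)) :
    word w ∈ Submodule.span ℂ (Sset (fun i => ((mdegC w i : ℤ) - mdegA w i))) := by
  induction w with
  | nil =>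
    apply Submodule.subset_span
    refine ⟨0, 0, fun i => by simp [mdegC, mdegA], ?_⟩
    simp [word, nom]
  | cons s t ih =>
    have hw : word (s :: t) = gen s * word t := by
      rw [word, List.map_cons, List.prod_cons]; rfl
    rw [hw]
    refine Submodule.span_induction (p := fun x _ => gen s * x ∈ Submodule.span ℂ
        (Sset (fun i => ((mdegC (s :: t) i : ℤ) - mdegA (s :: t) i)))) ?_ ?_ ?_ ?_ ih
    · intro x hx
      obtain ⟨α, β, hαβ, rfl⟩ := hx
      cases s with
      | inr j =>
        show cre j * nom α β ∈ _
        rw [cre_mul_nom]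
        apply Submodule.subset_span
        refine ⟨_, _, fun i => ?_, rfl⟩
        beta_reduce
        have hd : (α i : ℤ) - β i = (mdegC t i : ℤ) - mdegA t i := hαβ i
        by_cases hij : i = j
        · subst hij
          have e1 : mdegC (Sum.inr i :: t) i = mdegC t i + 1 := by
            simp [mdegC, List.count_cons, beq_inr_inr, beq_inl_inl, beq_inr_inl, beq_inl_inr, beq_iff_eq]
          have e2 : mdegA (Sum.inr i :: t) i = mdegA t i := by
            simp [mdegA, List.count_cons, beq_inr_inr, beq_inl_inl, beq_inr_inl, beq_inl_inr, beq_iff_eq]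
          rw [Function.update_self, e1, e2]
          push_cast
          omega
        · have e1 : mdegC (Sum.inr j :: t) i = mdegC t i := by
            simp [mdegC, List.count_cons, beq_inr_inr, beq_inl_inl, beq_inr_inl, beq_inl_inr, beq_iff_eq, hij, Ne.symm hij]
          have e2 : mdegA (Sum.inr j :: t) i = mdegA t i := by
            simp [mdegA, List.count_cons, beq_inr_inr, beq_inl_inl, beq_inr_inl, beq_inl_inr, beq_iff_eq]
          rw [Function.update_of_ne hij, e1, e2]
          omega
      | inl j =>
        show ann j * nom α β ∈ _
        rw [ann_mul_nom]
        apply add_mem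
        · apply Submodule.subset_span
          refine ⟨_, _, fun i => ?_, rfl⟩
          beta_reduce
          have hd : (α i : ℤ) - β i = (mdegC t i : ℤ) - mdegA t i := hαβ i
          have e1 : mdegC (Sum.inl j :: t) i = mdegC t i := by
            simp [mdegC, List.count_cons, beq_inr_inr, beq_inl_inl, beq_inr_inl, beq_inl_inr, beq_iff_eq]
          by_cases hij : i = j
          · subst hij
            have e2 : mdegA (Sum.inl i :: t) i = mdegA t i + 1 := by
              simp [mdegA, List.count_cons, beq_inr_inr, beq_inl_inl, beq_inr_inl, beq_inl_inr, beq_iff_eq]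
            rw [Function.update_self, e1, e2]
            push_cast
            omega
          · have e2 : mdegA (Sum.inl j :: t) i = mdegA t i := by
              simp [mdegA, List.count_cons, beq_inr_inr, beq_inl_inl, beq_inr_inl, beq_inl_inr, beq_iff_eq, hij, Ne.symm hij]
            rw [Function.update_of_ne hij, e1, e2]
            omega
        · rcases hk : α j with _ | m
          · rw [zero_nsmul]
            exact Submodule.zero_mem _
          · rw [← Nat.cast_smul_eq_nsmul ℂ]
            apply Submodule.smul_mem
            apply Submodule.subset_span
            refine ⟨_, _, fun i => ?_, rfl⟩
            beta_reduce
            have hd : (α i : ℤ) - β i = (mdegC t i : ℤ) - mdegA t i := hαβ i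
            have e1 : mdegC (Sum.inl j :: t) i = mdegC t i := by
              simp [mdegC, List.count_cons, beq_inr_inr, beq_inl_inl, beq_inr_inl, beq_inl_inr, beq_iff_eq]
            by_cases hij : i = j
            · subst hij
              have e2 : mdegA (Sum.inl i :: t) i = mdegA t i + 1 := by
                simp [mdegA, List.count_cons, beq_inr_inr, beq_inl_inl, beq_inr_inl, beq_inl_inr, beq_iff_eq]
              rw [Function.update_self, e1, e2]
              push_cast
              omega
            · have e2 : mdegA (Sum.inl j :: t) i = mdegA t i := by
                simp [mdegA, List.count_cons, beq_inr_inr, beq_inl_inl, beq_inr_inl, beq_inl_inr, beq_iff_eq, hij, Ne.symm hij]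
              rw [Function.update_of_ne hij, e1, e2]
              omega
    · simpa using Submodule.zero_mem _
    · intro x y _ _ hx hy
      rw [mul_add]
      exact add_mem hx hy
    · intro c x _ hx
      rw [mul_smul_comm]
      exact Submodule.smul_mem _ _ hx

lemma commute_of_span {s t : Set (Weyl n)} (hst : ∀ a ∈ s, ∀ b ∈ t, Commute a b) :
    ∀ x ∈ Submodule.span ℂ s, ∀ y ∈ Submodule.span ℂ t, Commute x y := by
  intro x hx
  refine Submodule.span_induction
    (p := fun x _ => ∀ y ∈ Submodule.span ℂ t, Commute x y) ?_ ?_ ?_ ?_ hx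
  · intro a ha y hy
    refine Submodule.span_induction (p := fun y _ => Commute a y) ?_ ?_ ?_ ?_ hy
    · exact fun b hb => hst a ha b hb
    · exact Commute.zero_right a
    · exact fun u v _ _ hu hv => hu.add_right hv
    · exact fun c u _ hu => hu.smul_right c
  · exact fun y _ => Commute.zero_left y
  · intro u v _ _ hu hv y hy
    exact (hu y hy).add_left (hv y hy)
  · intro c u _ hu y hy
    exact (hu y hy).smul_left c

end Aux

/-- Any two monomials in the `n`-mode Weyl algebra whose multi-degrees
are of the form `(α̃, α̃)` and `(α̃', α̃')` commute. -/
theorem statement9 {n : ℕ} (w w' : List (Fin n ⊕ Fin n))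
    (h : ∀ j : Fin n, mdegC w j = mdegA w j)
    (h' : ∀ j : Fin n, mdegC w' j = mdegA w' j) :
    comm (word w) (word w') = 0 := by
  have hc : Commute (word w) (word w') := by
    refine commute_of_span ?_ _ (word_mem w) _ (word_mem w')
    rintro a ⟨α, β, hαβ, rfl⟩ b ⟨α', β', hαβ', rfl⟩
    have hab : α = β := funext fun i => by
      have h1 : (α i : ℤ) - β i = (mdegC w i : ℤ) - mdegA w i := hαβ i
      rw [h i] at h1
      omega
    have hab' : α' = β' := funext fun i => by
      have h1 : (α' i : ℤ) - β' i = (mdegC w' i : ℤ) - mdegA w' i := hαβ' i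
      rw [h' i] at h1
      omega
    subst hab
    subst hab'
    exact commute_nom_diag α α'
  rw [comm, sub_eq_zero]
  exact hc.eq

end WeylPaper
end
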